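/- arXiv:2311.03209 — 7 statements merged into one kernel-verified Lean document; each statement's English description precedes it below -/
import Mathlib

section
/- Let G = (g^{ab}) be a symmetric positive definite real 3×3 matrix. For all p, q ∈ ℝ³ one has s = h² + 4, the radicand defining h is nonnegative (i.e. g^{ab}(p_a−q_a)(p_b−q_b) ≥ (p⁰−q⁰)²), and the inequalities h ≤ √s ≤ 2√(p⁰ q⁰) hold. -/
open Matrix Real

noncomputable section

/-- 3×3 real matrices. -/
abbrev Mat3 := Matrix (Fin 3) (Fin 3) ℝ
/-- Momentum vectors in ℝ³. -/
abbrev V3 := Fin 3 → ℝ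

/-- The quadratic form `g^{ab} p_a p_b = pᵀ G p`. -/
def quadG (G : Mat3) (p : V3) : ℝ := p ⬝ᵥ G *ᵥ p

/-- The particle energy `p⁰ = √(1 + g^{ab} p_a p_b)`. -/
def p0 (G : Mat3) (p : V3) : ℝ := Real.sqrt (1 + quadG G p)

/-- The relative momentum `h = √(−(p⁰−q⁰)² + g^{ab}(p_a−q_a)(p_b−q_b))`. -/
def hrel (G : Mat3) (p q : V3) : ℝ :=
  Real.sqrt (-(p0 G p - p0 G q) ^ 2 + quadG G (p - q))

/-- The square of the energy in the center of momentum system,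
`s = (p⁰+q⁰)² − g^{ab}(p_a+q_a)(p_b+q_b)`. -/
def sCM (G : Mat3) (p q : V3) : ℝ :=
  (p0 G p + p0 G q) ^ 2 - quadG G (p + q)

/-! Write `P = p⁰`, `Q = q⁰` and `B = g^{ab} p_a q_b`. Expanding the quadratic forms, both `s` and
the radicand of `h` are affine in the Minkowski product `PQ − B` of the unit timelike 4-vectors
`(p⁰, p)` and `(q⁰, q)`: `s = 2(PQ − B) + 2` and the radicand is `2(PQ − B) − 2`. Everything then
follows from the reverse Cauchy–Schwarz inequality `1 + |B| ≤ PQ`, which holds because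
`(PQ)² = (1 + |p|²)(1 + |q|²) ≥ (1 + |p| |q|)²`, with `|p|² = g^{ab} p_a p_b`, and
`|B| ≤ |p| |q|` by Cauchy–Schwarz for `G`. -/

lemma one_add_abs_le_sqrt_one_add_mul_sqrt_one_add {a b c : ℝ} (ha : 0 ≤ a) (hb : 0 ≤ b)
    (hc : c ^ 2 ≤ a * b) : 1 + |c| ≤ √(1 + a) * √(1 + b) := by
  rw [← Real.sqrt_mul (by linarith)]
  apply Real.le_sqrt_of_sq_le
  have h2c : 2 * |c| ≤ a + b := by nlinarith [sq_abs c, abs_nonneg c, sq_nonneg (a - b)]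
  nlinarith [sq_abs c]

namespace Matrix

theorem PosSemidef.isSymm {n : Type*} {G : Matrix n n ℝ} (hG : G.PosSemidef) : G.IsSymm :=
  isHermitian_iff_isSymm.1 hG.isHermitian

variable {n : Type*} [Fintype n]

section CommRing

variable {R : Type*} [CommRing R] {G : Matrix n n R}

theorem IsSymm.dotProduct_mulVec_comm (hG : G.IsSymm) (x y : n → R) :
    x ⬝ᵥ G *ᵥ y = y ⬝ᵥ G *ᵥ x := by
  rw [dotProduct_mulVec, ← mulVec_transpose, hG.eq, dotProduct_comm]

theorem IsSymm.add_dotProduct_mulVec_add (hG : G.IsSymm) (x y : n → R) :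
    (x + y) ⬝ᵥ G *ᵥ (x + y) = x ⬝ᵥ G *ᵥ x + 2 * (x ⬝ᵥ G *ᵥ y) + y ⬝ᵥ G *ᵥ y := by
  simp only [mulVec_add, dotProduct_add, add_dotProduct, hG.dotProduct_mulVec_comm y x]
  ring

theorem IsSymm.sub_dotProduct_mulVec_sub (hG : G.IsSymm) (x y : n → R) :
    (x - y) ⬝ᵥ G *ᵥ (x - y) = x ⬝ᵥ G *ᵥ x - 2 * (x ⬝ᵥ G *ᵥ y) + y ⬝ᵥ G *ᵥ y := by
  simp only [mulVec_sub, dotProduct_sub, sub_dotProduct, hG.dotProduct_mulVec_comm y x]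
  ring

end CommRing

theorem PosSemidef.dotProduct_mulVec_sq_le [DecidableEq n] {G : Matrix n n ℝ} (hG : G.PosSemidef)
    (x y : n → ℝ) : (x ⬝ᵥ G *ᵥ y) ^ 2 ≤ (x ⬝ᵥ G *ᵥ x) * (y ⬝ᵥ G *ᵥ y) := by
  simpa only [toBilin'_apply'] using
    LinearMap.BilinForm.apply_sq_le_of_symm G.toBilin'
      (fun x => by simpa only [toBilin'_apply', star_trivial] using hG.dotProduct_mulVec_nonneg x)
      (LinearMap.BilinForm.isSymm_iff.1 (isSymm_toBilin'_iff_isSymm.2 hG.isSymm)) x y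

end Matrix

lemma quadG_nonneg {G : Mat3} (hG : G.PosSemidef) (p : V3) : 0 ≤ quadG G p := by
  simpa only [quadG, star_trivial] using hG.dotProduct_mulVec_nonneg p

lemma p0_sq {G : Mat3} (hG : G.PosSemidef) (p : V3) : p0 G p ^ 2 = 1 + quadG G p :=
  Real.sq_sqrt (by linarith [quadG_nonneg hG p])

lemma one_add_abs_le_p0_mul_p0 {G : Mat3} (hG : G.PosSemidef) (p q : V3) :
    1 + |p ⬝ᵥ G *ᵥ q| ≤ p0 G p * p0 G q :=
  one_add_abs_le_sqrt_one_add_mul_sqrt_one_add (quadG_nonneg hG p) (quadG_nonneg hG q)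
    (hG.dotProduct_mulVec_sq_le p q)

lemma radicand_hrel_eq {G : Mat3} (hG : G.PosSemidef) (p q : V3) :
    -(p0 G p - p0 G q) ^ 2 + quadG G (p - q) = 2 * (p0 G p * p0 G q - p ⬝ᵥ G *ᵥ q) - 2 := by
  rw [quadG, hG.isSymm.sub_dotProduct_mulVec_sub, ← quadG, ← quadG]
  linear_combination (-1 : ℝ) * p0_sq hG p - p0_sq hG q

lemma sCM_eq {G : Mat3} (hG : G.PosSemidef) (p q : V3) :
    sCM G p q = 2 * (p0 G p * p0 G q - p ⬝ᵥ G *ᵥ q) + 2 := by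
  rw [sCM, quadG, hG.isSymm.add_dotProduct_mulVec_add, ← quadG, ← quadG]
  linear_combination p0_sq hG p + p0_sq hG q

/-- for a symmetric positive definite `G` and all `p, q ∈ ℝ³`,
`s = h² + 4`, the radicand defining `h` is nonnegative, and `h ≤ √s ≤ 2√(p⁰q⁰)`. -/
theorem stmt0 (G : Mat3) (hG : G.PosDef) (p q : V3) :
    sCM G p q = hrel G p q ^ 2 + 4 ∧
    (p0 G p - p0 G q) ^ 2 ≤ quadG G (p - q) ∧
    hrel G p q ≤ Real.sqrt (sCM G p q) ∧
    Real.sqrt (sCM G p q) ≤ 2 * Real.sqrt (p0 G p * p0 G q) := by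
  have hG' := hG.posSemidef
  have hPQ := one_add_abs_le_p0_mul_p0 hG' p q
  have hB := le_abs_self (p ⬝ᵥ G *ᵥ q)
  have hB' := neg_abs_le (p ⬝ᵥ G *ᵥ q)
  have hrad := radicand_hrel_eq hG' p q
  have hs := sCM_eq hG' p q
  have hh : hrel G p q ^ 2 = -(p0 G p - p0 G q) ^ 2 + quadG G (p - q) :=
    Real.sq_sqrt (by linarith)
  refine ⟨by linarith, by linarith, Real.sqrt_le_sqrt (by linarith), ?_⟩
  calc √(sCM G p q) ≤ √(2 ^ 2 * (p0 G p * p0 G q)) := Real.sqrt_le_sqrt (by linarith)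
    _ = 2 * √(p0 G p * p0 G q) := by rw [Real.sqrt_mul (by positivity), Real.sqrt_sq two_pos.le]
end
end

section
/- For all p̂, q̂ ∈ ℝ³ and every unit vector ω ∈ 𝕊² ⊂ ℝ³, the post-collision momenta defined by the explicit parametrization satisfy energy–momentum conservation, p'⁰ + q'⁰ = p⁰ + q⁰ and p̂' + q̂' = p̂ + q̂, and they remain on the unit mass shell: (p'⁰)² = 1 + |p̂'|² and (q'⁰)² = 1 + |q̂'|². -/
open Matrix Real

noncomputable section

/-- The special relativistic energy `p⁰ = √(1 + |p̂|²)` (Minkowski metric). -/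
def p0E (p : V3) : ℝ := Real.sqrt (1 + p ⬝ᵥ p)

lemma dot_self_nonneg' (p : V3) : 0 ≤ p ⬝ᵥ p :=
  Finset.sum_nonneg fun _ _ => mul_self_nonneg _

lemma p0E_sq (p : V3) : (p0E p) ^ 2 = 1 + p ⬝ᵥ p :=
  Real.sq_sqrt (by nlinarith [dot_self_nonneg' p])

lemma p0E_ge_one (p : V3) : 1 ≤ p0E p := by
  rw [show (1:ℝ) = Real.sqrt 1 by simp]
  exact Real.sqrt_le_sqrt (by linarith [dot_self_nonneg' p])

lemma cs3 (p q : V3) : (p ⬝ᵥ q)^2 ≤ (p ⬝ᵥ p) * (q ⬝ᵥ q) := by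
  simp only [dotProduct, Fin.sum_univ_three]
  nlinarith [sq_nonneg (p 0 * q 1 - p 1 * q 0), sq_nonneg (p 0 * q 2 - p 2 * q 0),
    sq_nonneg (p 1 * q 2 - p 2 * q 1)]

lemma two_dot (p q : V3) : 2*(p ⬝ᵥ q) ≤ p ⬝ᵥ p + q ⬝ᵥ q := by
  simp only [dotProduct, Fin.sum_univ_three]
  nlinarith [sq_nonneg (p 0 - q 0), sq_nonneg (p 1 - q 1), sq_nonneg (p 2 - q 2)]

lemma energy_dot (p q : V3) : 1 + p ⬝ᵥ q ≤ p0E p * p0E q := by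
  have hA := p0E_sq p
  have hB := p0E_sq q
  have hA1 := p0E_ge_one p
  have hB1 := p0E_ge_one q
  have hcs := cs3 p q
  have h2 := two_dot p q
  nlinarith [sq_nonneg (p0E p * p0E q - (1 + p ⬝ᵥ q)), mul_pos (by linarith : (0:ℝ) < p0E p) (by linarith : (0:ℝ) < p0E q)]

lemma aux1 (A B c r cp cq np nq : ℝ) (hr : r ≠ 0) (hnr : A + B + r ≠ 0)
    (hc : c = cp + cq) (hN : np + nq = (A+B)^2 - r^2) :
    -B*c/r + cq + c*nq/(r*(A+B+r)) = A*c/r - (cp + c/(r*(A+B+r))*np) := by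
  subst hc
  have hnq : nq = (A+B)^2 - r^2 - np := by linarith
  subst hnq
  field_simp
  ring

/-- the explicit parametrization of the post-collision momenta satisfies
energy–momentum conservation and stays on the unit mass shell. -/
theorem stmt2 (p q ω : V3) (hω : ω ⬝ᵥ ω = 1) :
    let n : V3 := p + q
    let n0 : ℝ := p0E p + p0E q
    let s : ℝ := n0 ^ 2 - n ⬝ᵥ n
    let a : ℝ := -(p0E q) * (n ⬝ᵥ ω) / Real.sqrt s + q ⬝ᵥ ω
      + (n ⬝ᵥ ω) * (n ⬝ᵥ q) / (Real.sqrt s * (n0 + Real.sqrt s))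
    let p'0 : ℝ := p0E p + 2 * a * (n ⬝ᵥ ω) / Real.sqrt s
    let q'0 : ℝ := p0E q - 2 * a * (n ⬝ᵥ ω) / Real.sqrt s
    let p' : V3 := fun d => p d + 2 * a * (ω d + (n ⬝ᵥ ω) * n d / (Real.sqrt s * (n0 + Real.sqrt s)))
    let q' : V3 := fun d => q d - 2 * a * (ω d + (n ⬝ᵥ ω) * n d / (Real.sqrt s * (n0 + Real.sqrt s)))
    p'0 + q'0 = p0E p + p0E q ∧
    (∀ d, p' d + q' d = p d + q d) ∧
    p'0 ^ 2 = 1 + p' ⬝ᵥ p' ∧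
    q'0 ^ 2 = 1 + q' ⬝ᵥ q' := by
  intro n n0 s a p'0 q'0 p' q'
  set A := p0E p with hAdef
  set B := p0E q with hBdef
  have hA : A ^ 2 = 1 + p ⬝ᵥ p := p0E_sq p
  have hB : B ^ 2 = 1 + q ⬝ᵥ q := p0E_sq q
  have hA1 : 1 ≤ A := p0E_ge_one p
  have hB1 : 1 ≤ B := p0E_ge_one q
  -- s in scalar form
  have hnn : n ⬝ᵥ n = p ⬝ᵥ p + 2 * (p ⬝ᵥ q) + q ⬝ᵥ q := by
    show (p + q) ⬝ᵥ (p + q) = _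
    rw [dotProduct_add, add_dotProduct, add_dotProduct, dotProduct_comm q p]
    ring
  have hs : s = 2 + 2 * (A * B) - 2 * (p ⬝ᵥ q) := by
    show n0 ^ 2 - n ⬝ᵥ n = _
    rw [hnn]
    show (A + B)^2 - _ = _
    nlinarith [hA, hB]
  have hspos : (0:ℝ) < s := by
    have := energy_dot p q
    rw [hs]; linarith
  set r := Real.sqrt s with hrdef
  have hr2 : r ^ 2 = s := Real.sq_sqrt hspos.le
  have hrpos : 0 < r := Real.sqrt_pos.mpr hspos
  have hr0 : r ≠ 0 := ne_of_gt hrpos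
  have hn0 : n0 = A + B := rfl
  have hnr0 : n0 + r ≠ 0 := by rw [hn0]; positivity
  set c := n ⬝ᵥ ω with hcdef
  set k := c / (r * (n0 + r)) with hkdef
  set v : V3 := ω + k • n with hvdef
  -- p' and q' in vector form
  have hp' : p' = p + (2*a) • v := by
    funext d
    show p d + 2 * a * (ω d + c * n d / (r * (n0 + r))) = p d + (2*a) * (ω d + k * n d)
    rw [hkdef]; ring
  have hq' : q' = q + (-(2*a)) • v := by
    funext d
    show q d - 2 * a * (ω d + c * n d / (r * (n0 + r))) = q d + (-(2*a)) * (ω d + k * n d)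
    rw [hkdef]; ring
  -- dot products with v
  have hdotv : ∀ u : V3, u ⬝ᵥ v = u ⬝ᵥ ω + k * (u ⬝ᵥ n) := by
    intro u
    rw [hvdef, dotProduct_add, dotProduct_smul, smul_eq_mul]
  have hvv : v ⬝ᵥ v = 1 + c^2 / r^2 := by
    rw [hvdef, dotProduct_add, add_dotProduct, add_dotProduct, dotProduct_smul,
      smul_dotProduct, smul_dotProduct, dotProduct_smul, hω, smul_eq_mul, smul_eq_mul,
      smul_eq_mul, smul_eq_mul]
    have h1 : ω ⬝ᵥ n = c := dotProduct_comm ω n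
    have h2 : n ⬝ᵥ ω = c := rfl
    rw [h1, h2]
    have hN : n ⬝ᵥ n = n0^2 - r^2 := by
      rw [hr2]; show n ⬝ᵥ n = n0^2 - (n0^2 - n ⬝ᵥ n); ring
    rw [hN, hkdef]
    field_simp
    ring
  -- the key scalar identity for a
  have hcsplit : c = p ⬝ᵥ ω + q ⬝ᵥ ω := by
    rw [hcdef]; show (p + q) ⬝ᵥ ω = _; rw [add_dotProduct]
  have hNsplit : p ⬝ᵥ n + n ⬝ᵥ q = (A + B)^2 - r^2 := by
    have h1 : p ⬝ᵥ n = p ⬝ᵥ p + p ⬝ᵥ q := by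
      show p ⬝ᵥ (p + q) = _; rw [dotProduct_add]
    have h2 : n ⬝ᵥ q = p ⬝ᵥ q + q ⬝ᵥ q := by
      show (p + q) ⬝ᵥ q = _; rw [add_dotProduct]
    rw [hr2, hs, h1, h2]
    nlinarith [hA, hB]
  have ha : a = A * c / r - p ⬝ᵥ v := by
    have := aux1 A B c r (p ⬝ᵥ ω) (q ⬝ᵥ ω) (p ⬝ᵥ n) (n ⬝ᵥ q) hr0
      (by rw [← hn0]; exact hnr0) hcsplit hNsplit
    rw [hdotv p, hkdef]
    exact this
  have hqv : q ⬝ᵥ v = B * c / r + a := by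
    have : a = -B * c / r + q ⬝ᵥ ω + c * (n ⬝ᵥ q) / (r * (n0 + r)) := rfl
    rw [hdotv q, hkdef, this]
    have h2 : q ⬝ᵥ n = n ⬝ᵥ q := dotProduct_comm q n
    rw [h2]; ring
  have hpv : p ⬝ᵥ v = A * c / r - a := by linarith [ha]
  refine ⟨?_, ?_, ?_, ?_⟩
  · show (A + 2 * a * c / r) + (B - 2 * a * c / r) = A + B
    ring
  · intro d
    show (p d + 2 * a * (ω d + c * n d / (r * (n0 + r)))) +
      (q d - 2 * a * (ω d + c * n d / (r * (n0 + r)))) = p d + q d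
    ring
  · have hpp : p' ⬝ᵥ p' = p ⬝ᵥ p + (2*a) * (p ⬝ᵥ v) * 2 + (2*a)^2 * (v ⬝ᵥ v) := by
      rw [hp', dotProduct_add, add_dotProduct, add_dotProduct, dotProduct_smul,
        smul_dotProduct, smul_dotProduct, dotProduct_smul, smul_eq_mul, smul_eq_mul,
        smul_eq_mul, smul_eq_mul, dotProduct_comm v p]
      ring
    show (A + 2 * a * c / r) ^ 2 = 1 + p' ⬝ᵥ p'
    rw [hpp, hvv, hpv]
    linear_combination hA
  · have hqq : q' ⬝ᵥ q' = q ⬝ᵥ q - (2*a) * (q ⬝ᵥ v) * 2 + (2*a)^2 * (v ⬝ᵥ v) := by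
      rw [hq', dotProduct_add, add_dotProduct, add_dotProduct, dotProduct_smul,
        smul_dotProduct, smul_dotProduct, dotProduct_smul, smul_eq_mul, smul_eq_mul,
        smul_eq_mul, smul_eq_mul, dotProduct_comm v q]
      ring
    show (B - 2 * a * c / r) ^ 2 = 1 + q' ⬝ᵥ q'
    rw [hqq, hvv, hqv]
    linear_combination hB
end
end

section
/- Let G = (g^{ab}) be a symmetric positive definite real 3×3 matrix and fix q ∈ ℝ³. On the set of p ∈ ℝ³ where h > 0, the functions p ↦ h and p ↦ √s are differentiable with ∂h/∂p_a = (q⁰/h)(p^a/p⁰ − q^a/q⁰) and ∂√s/∂p_a = (q⁰/√s)(p^a/p⁰ − q^a/q⁰), where p^a = g^{ab}p_b. Moreover, there is an absolute constant C such that for every orthonormal frame E for G and every a = 1,2,3, |∂h/∂p_a| ≤ C q⁰ √(p⁰ q⁰) ‖g⁻¹‖ ‖e⁻¹‖ and |∂√s/∂p_a| ≤ C q⁰ √(p⁰ q⁰) ‖g⁻¹‖ ‖e⁻¹‖. -/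
open Matrix Real

noncomputable section

/-- The maximum of the absolute values of the entries of a matrix. -/
def entryNorm (M : Mat3) : ℝ := ⨆ i, ⨆ j, |M i j|

/-!
`s = h² + 4`, because `s − h² = 2(p⁰² − g(p,p)) + 2(q⁰² − g(q,q))`. So along a line `p + t e`
both radicands have the derivative `2 q⁰ (e·Gp/p⁰ − e·Gq/q⁰)`, which gives both formulas.

For the bound, write `p^a/p⁰ − q^a/q⁰ = (G v)_a / (p⁰q⁰)` with `v = q⁰p − p⁰q`. The identity
`g(v,v) + (p⁰ − q⁰)² = h² p⁰q⁰` gives `√g(v,v) ≤ h √(p⁰q⁰)`, and an orthonormal frame `E`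
writes `v = Eᵀ w` with `|w|² = g(v,v)`, so each entry of `G v` is at most
`9 ‖g⁻¹‖ ‖e⁻¹‖ h √(p⁰q⁰)`. The factor `h` cancels; for `√s` use `h ≤ √s`.
-/

lemma Matrix.PosSemidef.isSymm_s3 {n : Type*} [Fintype n] {A : Matrix n n ℝ} (hA : A.PosSemidef) :
    A.IsSymm :=
  isHermitian_iff_isSymm.mp hA.isHermitian

namespace RelativeMomentum

variable {G : Mat3}

lemma dotProduct_mulVec_comm (hG : G.IsSymm) (u v : V3) : u ⬝ᵥ G *ᵥ v = v ⬝ᵥ G *ᵥ u := by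
  rw [dotProduct_mulVec, ← mulVec_transpose, hG.eq, dotProduct_comm]

lemma quadG_add_smul (hG : G.IsSymm) (u v : V3) (t : ℝ) :
    quadG G (u + t • v) = quadG G u + t * (2 * (v ⬝ᵥ G *ᵥ u)) + t ^ 2 * quadG G v := by
  simp only [quadG, mulVec_add, mulVec_smul, dotProduct_add, add_dotProduct,
    smul_dotProduct, dotProduct_smul, smul_eq_mul, dotProduct_mulVec_comm hG u v]
  ring

lemma quadG_nonneg (hG : G.PosSemidef) (p : V3) : 0 ≤ quadG G p := by
  simpa [quadG] using hG.dotProduct_mulVec_nonneg p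

lemma p0_sq (hG : G.PosSemidef) (p : V3) : p0 G p ^ 2 = 1 + quadG G p :=
  sq_sqrt (by linarith [quadG_nonneg hG p])

lemma one_le_p0 (hG : G.PosSemidef) (p : V3) : 1 ≤ p0 G p :=
  one_le_sqrt.mpr (by linarith [quadG_nonneg hG p])

lemma p0_pos (hG : G.PosSemidef) (p : V3) : 0 < p0 G p :=
  one_pos.trans_le (one_le_p0 hG p)

lemma hasDerivAt_quadG_line (hG : G.IsSymm) (u e : V3) :
    HasDerivAt (fun t : ℝ => quadG G (u + t • e)) (2 * (e ⬝ᵥ G *ᵥ u)) 0 := by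
  have hsq : HasDerivAt (fun t : ℝ => t ^ 2 * quadG G e) 0 0 := by
    simpa using (hasDerivAt_pow 2 (0 : ℝ)).mul_const (quadG G e)
  simp only [quadG_add_smul hG]
  exact ((((hasDerivAt_id (0 : ℝ)).mul_const (2 * (e ⬝ᵥ G *ᵥ u))).const_add
    (quadG G u)).add hsq).congr_deriv (by simp)

lemma hasDerivAt_p0_line (hG : G.PosSemidef) (p e : V3) :
    HasDerivAt (fun t : ℝ => p0 G (p + t • e)) ((e ⬝ᵥ G *ᵥ p) / p0 G p) 0 := by
  have h := ((hasDerivAt_quadG_line hG.isSymm_s3 p e).const_add 1).sqrt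
    (by simpa using (add_pos_of_pos_of_nonneg one_pos (quadG_nonneg hG p)).ne')
  refine h.congr_deriv ?_
  rw [zero_smul, add_zero, ← p0]
  field_simp

def hrelSq (G : Mat3) (p q : V3) : ℝ := -(p0 G p - p0 G q) ^ 2 + quadG G (p - q)

lemma hrel_eq_sqrt_hrelSq (p q : V3) : hrel G p q = √(hrelSq G p q) := rfl

lemma hrelSq_pos_of_hrel_pos {p q : V3} (hpos : 0 < hrel G p q) : 0 < hrelSq G p q :=
  sqrt_pos.mp hpos

lemma sCM_eq_hrelSq_add_four (hG : G.PosSemidef) (p q : V3) :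
    sCM G p q = hrelSq G p q + 4 := by
  have hsum := quadG_add_smul hG.isSymm_s3 p q 1
  have hdiff := quadG_add_smul hG.isSymm_s3 p q (-1)
  rw [one_smul] at hsum
  rw [neg_one_smul, ← sub_eq_add_neg] at hdiff
  rw [sCM, hrelSq]
  linear_combination 2 * p0_sq hG p + 2 * p0_sq hG q - hsum - hdiff

lemma hrel_le_sqrt_sCM (hG : G.PosSemidef) (p q : V3) : hrel G p q ≤ √(sCM G p q) := by
  rw [hrel_eq_sqrt_hrelSq, sCM_eq_hrelSq_add_four hG]
  exact sqrt_le_sqrt (by linarith)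

lemma hasDerivAt_hrelSq_line (hG : G.PosSemidef) (p q e : V3) :
    HasDerivAt (fun t : ℝ => hrelSq G (p + t • e) q)
      (2 * (p0 G q * ((e ⬝ᵥ G *ᵥ p) / p0 G p - (e ⬝ᵥ G *ᵥ q) / p0 G q))) 0 := by
  have hquad := hasDerivAt_quadG_line hG.isSymm_s3 (p - q) e
  simp only [sub_add_eq_add_sub] at hquad
  have h := (((hasDerivAt_p0_line hG p e).sub_const (p0 G q)).pow 2).neg.add hquad
  refine h.congr_deriv ?_
  have := (p0_pos hG p).ne'
  have := (p0_pos hG q).ne'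
  simp only [zero_smul, add_zero, mulVec_sub, dotProduct_sub]
  field_simp
  ring

lemma hasDerivAt_hrel_line (hG : G.PosSemidef) {p q : V3} (e : V3) (hpos : 0 < hrel G p q) :
    HasDerivAt (fun t : ℝ => hrel G (p + t • e) q)
      (p0 G q / hrel G p q * ((e ⬝ᵥ G *ᵥ p) / p0 G p - (e ⬝ᵥ G *ᵥ q) / p0 G q)) 0 := by
  refine ((hasDerivAt_hrelSq_line hG p q e).sqrt ?_).congr_deriv ?_
  · simpa using (hrelSq_pos_of_hrel_pos hpos).ne'
  · simp only [zero_smul, add_zero, ← hrel_eq_sqrt_hrelSq]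
    field_simp

lemma hasDerivAt_sqrt_sCM_line (hG : G.PosSemidef) {p q : V3} (e : V3)
    (hpos : 0 < hrel G p q) :
    HasDerivAt (fun t : ℝ => √(sCM G (p + t • e) q))
      (p0 G q / √(sCM G p q) * ((e ⬝ᵥ G *ᵥ p) / p0 G p - (e ⬝ᵥ G *ᵥ q) / p0 G q)) 0 := by
  simp only [sCM_eq_hrelSq_add_four hG]
  refine (((hasDerivAt_hrelSq_line hG p q e).add_const 4).sqrt ?_).congr_deriv ?_
  · simpa using (add_pos (hrelSq_pos_of_hrel_pos hpos) four_pos).ne'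
  · rw [zero_smul, add_zero]
    field_simp

lemma quadG_smul (c : ℝ) (u : V3) : quadG G (c • u) = c ^ 2 * quadG G u := by
  simp only [quadG, mulVec_smul, dotProduct_smul, smul_dotProduct, smul_eq_mul]
  ring

lemma quadG_smul_sub_smul_add_sq (hG : G.PosSemidef) (p q : V3) :
    quadG G (p0 G q • p - p0 G p • q) + (p0 G p - p0 G q) ^ 2
      = hrelSq G p q * (p0 G p * p0 G q) := by
  have hdiff := quadG_add_smul hG.isSymm_s3 p q (-1)
  have hcomb := quadG_add_smul hG.isSymm_s3 (p0 G q • p) q (-p0 G p)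
  rw [neg_one_smul, ← sub_eq_add_neg] at hdiff
  rw [neg_smul, ← sub_eq_add_neg, quadG_smul, mulVec_smul, dotProduct_smul, smul_eq_mul] at hcomb
  rw [hcomb, hrelSq, hdiff]
  linear_combination (p0 G p * p0 G q - p0 G q ^ 2) * p0_sq hG p +
    (p0 G p * p0 G q - p0 G p ^ 2) * p0_sq hG q

lemma le_entryNorm (M : Mat3) (i j : Fin 3) : |M i j| ≤ entryNorm M :=
  (le_ciSup (f := fun j => |M i j|) (Set.finite_range _).bddAbove j).trans
    (le_ciSup (f := fun i => ⨆ j, |M i j|) (Set.finite_range _).bddAbove i)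

lemma entryNorm_nonneg (M : Mat3) : 0 ≤ entryNorm M :=
  (abs_nonneg _).trans (le_entryNorm M 0 0)

lemma abs_mulVec_apply_le {m n : Type*} [Fintype n] (M : Matrix m n ℝ) {v : n → ℝ} {K B : ℝ}
    (hM : ∀ i j, |M i j| ≤ K) (hv : ∀ j, |v j| ≤ B) (i : m) :
    |(M *ᵥ v) i| ≤ (Fintype.card n : ℝ) * K * B := by
  calc |(M *ᵥ v) i| ≤ ∑ j, |M i j| * |v j| := by
        simpa only [mulVec, dotProduct, abs_mul] using
          Finset.abs_sum_le_sum_abs (fun j => M i j * v j) Finset.univ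
    _ ≤ ∑ _j : n, K * B := Finset.sum_le_sum fun j _ =>
        mul_le_mul (hM i j) (hv j) (abs_nonneg _) ((abs_nonneg (M i j)).trans (hM i j))
    _ = (Fintype.card n : ℝ) * K * B := by simp [mul_assoc]

lemma abs_apply_le_of_frame {E : Mat3} (hE : E * G * Eᵀ = 1) (v : V3) (b : Fin 3) :
    |v b| ≤ 3 * entryNorm E * √(quadG G v) := by
  set w := (E * G) *ᵥ v
  have hv : Eᵀ *ᵥ w = v := by
    rw [mulVec_mulVec, mul_eq_one_comm.mp hE, one_mulVec]
  have hquad : quadG G v = w ⬝ᵥ w := by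
    rw [quadG, ← hv, mulVec_transpose, ← dotProduct_mulVec, ← mulVec_transpose, mulVec_mulVec,
      mulVec_mulVec, hE, one_mulVec]
  have hw : ∀ i, |w i| ≤ √(quadG G v) := fun i => by
    rw [hquad, ← sqrt_sq_eq_abs, sq]
    exact sqrt_le_sqrt
      (Finset.single_le_sum (fun j _ => mul_self_nonneg (w j)) (Finset.mem_univ i))
  simpa [hv] using abs_mulVec_apply_le Eᵀ (fun i j => le_entryNorm E j i) hw b

lemma abs_mulVec_apply_le_of_frame {E : Mat3} (hE : E * G * Eᵀ = 1) (v : V3) (a : Fin 3) :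
    |(G *ᵥ v) a| ≤ 9 * entryNorm G * entryNorm E * √(quadG G v) := by
  have h := abs_mulVec_apply_le G (le_entryNorm G) (abs_apply_le_of_frame hE v) a
  refine h.trans (le_of_eq ?_)
  rw [Fintype.card_fin]
  push_cast
  ring

lemma mulVec_apply_div_sub_div {m n : Type*} [Fintype n] (M : Matrix m n ℝ) (p q : n → ℝ)
    {x y : ℝ} (hx : x ≠ 0) (hy : y ≠ 0) (a : m) :
    (M *ᵥ p) a / x - (M *ᵥ q) a / y = (M *ᵥ (y • p - x • q)) a / (x * y) := by
  rw [mulVec_sub, mulVec_smul, mulVec_smul]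
  field_simp
  simp only [Pi.sub_apply, Pi.smul_apply, smul_eq_mul]
  ring

lemma sqrt_quadG_smul_sub_smul_le (hG : G.PosSemidef) (p q : V3) :
    √(quadG G (p0 G q • p - p0 G p • q)) ≤ hrel G p q * √(p0 G p * p0 G q) := by
  rw [hrel_eq_sqrt_hrelSq, ← sqrt_mul' _ (mul_pos (p0_pos hG p) (p0_pos hG q)).le,
    ← quadG_smul_sub_smul_add_sq hG]
  exact sqrt_le_sqrt (le_add_of_nonneg_right (sq_nonneg _))

lemma abs_hrel_deriv_le (hG : G.PosSemidef) {E : Mat3} (hE : E * G * Eᵀ = 1) {p q : V3}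
    (hpos : 0 < hrel G p q) (a : Fin 3) :
    |p0 G q / hrel G p q * ((G *ᵥ p) a / p0 G p - (G *ᵥ q) a / p0 G q)|
      ≤ 9 * p0 G q * √(p0 G p * p0 G q) * entryNorm G * entryNorm E := by
  have hv := sqrt_quadG_smul_sub_smul_le hG p q
  set P := p0 G p
  set Q := p0 G q
  set h := hrel G p q
  set v := Q • p - P • q
  have hPQ : 1 ≤ P * Q := one_le_mul_of_one_le_of_one_le (one_le_p0 hG p) (one_le_p0 hG q)
  have hQ : 0 < Q := p0_pos hG q
  calc |Q / h * ((G *ᵥ p) a / P - (G *ᵥ q) a / Q)|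
      = Q / h * (|(G *ᵥ v) a| / (P * Q)) := by
        rw [mulVec_apply_div_sub_div G p q (p0_pos hG p).ne' hQ.ne', abs_mul,
          abs_of_pos (div_pos hQ hpos), abs_div, abs_of_pos (by positivity : 0 < P * Q)]
    _ ≤ Q / h * |(G *ᵥ v) a| := by
        gcongr
        exact div_le_self (abs_nonneg _) hPQ
    _ ≤ Q / h * (9 * entryNorm G * entryNorm E * (h * √(P * Q))) := by
        gcongr
        refine (abs_mulVec_apply_le_of_frame hE v a).trans ?_
        have := entryNorm_nonneg G
        have := entryNorm_nonneg E
        gcongr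
    _ = 9 * Q * √(P * Q) * entryNorm G * entryNorm E := by
        field_simp

lemma abs_sqrt_sCM_deriv_le (hG : G.PosSemidef) {E : Mat3} (hE : E * G * Eᵀ = 1) {p q : V3}
    (hpos : 0 < hrel G p q) (a : Fin 3) :
    |p0 G q / √(sCM G p q) * ((G *ᵥ p) a / p0 G p - (G *ᵥ q) a / p0 G q)|
      ≤ 9 * p0 G q * √(p0 G p * p0 G q) * entryNorm G * entryNorm E := by
  refine le_trans ?_ (abs_hrel_deriv_le hG hE hpos a)
  have hQ := p0_pos hG q
  have hs := hrel_le_sqrt_sCM hG p q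
  rw [abs_mul, abs_mul, abs_of_pos (div_pos hQ hpos), abs_of_pos (div_pos hQ (hpos.trans_le hs))]
  gcongr

end RelativeMomentum

/-- on the set where `h > 0`, `p ↦ h` and `p ↦ √s` are differentiable with
`∂h/∂p_a = (q⁰/h)(p^a/p⁰ − q^a/q⁰)` and `∂√s/∂p_a = (q⁰/√s)(p^a/p⁰ − q^a/q⁰)`, and there is
an absolute constant `C` such that for every orthonormal frame `E` for `G` (i.e. `E G Eᵀ = 1`),
`|∂h/∂p_a| ≤ C q⁰ √(p⁰q⁰) ‖g⁻¹‖ ‖e⁻¹‖` and `|∂√s/∂p_a| ≤ C q⁰ √(p⁰q⁰) ‖g⁻¹‖ ‖e⁻¹‖`. -/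
theorem stmt3 :
    ∃ C > (0 : ℝ), ∀ (G : Mat3), G.PosDef → ∀ q p : V3, 0 < hrel G p q → ∀ a : Fin 3,
      HasDerivAt (fun t : ℝ => hrel G (p + t • (Pi.single a 1 : V3)) q)
        (p0 G q / hrel G p q * ((G *ᵥ p) a / p0 G p - (G *ᵥ q) a / p0 G q)) 0 ∧
      HasDerivAt (fun t : ℝ => Real.sqrt (sCM G (p + t • (Pi.single a 1 : V3)) q))
        (p0 G q / Real.sqrt (sCM G p q) * ((G *ᵥ p) a / p0 G p - (G *ᵥ q) a / p0 G q)) 0 ∧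
      ∀ E : Mat3, E * G * Eᵀ = 1 →
        |p0 G q / hrel G p q * ((G *ᵥ p) a / p0 G p - (G *ᵥ q) a / p0 G q)|
          ≤ C * p0 G q * Real.sqrt (p0 G p * p0 G q) * entryNorm G * entryNorm E ∧
        |p0 G q / Real.sqrt (sCM G p q) * ((G *ᵥ p) a / p0 G p - (G *ᵥ q) a / p0 G q)|
          ≤ C * p0 G q * Real.sqrt (p0 G p * p0 G q) * entryNorm G * entryNorm E := by
  refine ⟨9, by norm_num, fun G hG q p hpos a => ?_⟩
  have hG' := hG.posSemidef
  refine ⟨?_, ?_, fun E hE => ⟨RelativeMomentum.abs_hrel_deriv_le hG' hE hpos a,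
    RelativeMomentum.abs_sqrt_sCM_deriv_le hG' hE hpos a⟩⟩
  · simpa only [single_one_dotProduct] using
      RelativeMomentum.hasDerivAt_hrel_line hG' (Pi.single a 1) hpos
  · simpa only [single_one_dotProduct] using
      RelativeMomentum.hasDerivAt_sqrt_sCM_line hG' (Pi.single a 1) hpos
end
end

section
/- (Propagation of the Hamiltonian constraint.) Let Λ ∈ ℝ. Suppose on [t₀,T] we are given differentiable symmetric matrix-valued functions g^{ab}(t) (positive definite) and k^{ab}(t), a continuous symmetric matrix-valued function S^{ab}(t), and a differentiable function ρ(t), satisfying: dg^{ab}/dt = −2k^{ab}; dk^{ab}/dt = −2k^a_c k^{bc} − k k^{ab} + S^{ab} + (1/2)(ρ−S)g^{ab} + Λg^{ab}; and dρ/dt = −kρ − k^{ab}S_{ab}. Define ξ(t) = −k_{ab}k^{ab} + k² − 2ρ − 2Λ. Then ξ satisfies dξ/dt = −2kξ on [t₀,T]; in particular, if ξ(t₀) = 0 then ξ(t) = 0 for all t ∈ [t₀,T]. -/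
/-!
Write `M = g⁻¹ k` for the mixed tensor `k_a^b` and `N = g⁻¹ S`; then `k = tr M` and
`ξ = -tr (M²) + (tr M)² - 2ρ - 2Λ`. In `dM/dt = d(g⁻¹)/dt k + g⁻¹ dk/dt` the first term,
`2 g⁻¹ k g⁻¹ k`, cancels the quadratic term of `dk/dt`, leaving
`dM/dt = -(tr M) M + N + ((ρ - tr N)/2 + Λ) 1`. Substituting this and `dρ/dt`, in dimension `n`
one finds `dξ/dt + 2 (tr M) ξ = (n - 3) (tr M) (ρ - tr N + 2Λ)`, which vanishes for `n = 3`.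
Finally `ξ' = -2kξ` is a linear ODE with continuous coefficient, so `ξ(t₀) = 0` forces `ξ ≡ 0`
by uniqueness of solutions.
-/

open Matrix Real Set

noncomputable section

/-- The trace `g_{ab} M^{ab}` of a matrix with upper indices (indices lowered with `G⁻¹`). -/
def trK (G M : Mat3) : ℝ := ∑ a, ∑ b, G⁻¹ a b * M a b

/-- The right hand side of the evolution equation for `k^{ab}`:
`−2k^a_c k^{bc} − k k^{ab} + S^{ab} + (1/2)(ρ−S)g^{ab} + Λ g^{ab}`, with abstract matter
terms `S^{ab}` and `ρ`, where `S = g_{ab}S^{ab}`. -/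
def kEvolAbs (Λ : ℝ) (G K SM : Mat3) (ρ : ℝ) : Mat3 :=
  (-2 : ℝ) • (K * G⁻¹ * K) - trK G K • K + SM + ((1 / 2) * (ρ - trK G SM)) • G + Λ • G

/-- The constraint quantity `ξ = −k_{ab}k^{ab} + k² − 2ρ − 2Λ`. -/
def xiC (Λ : ℝ) (G K : Mat3) (ρ : ℝ) : ℝ :=
  -(∑ a, ∑ b, (G⁻¹ * K * G⁻¹) a b * K a b) + trK G K ^ 2 - 2 * ρ - 2 * Λ

def xiTrace {n : Type*} [Fintype n] (Λ : ℝ) (M : Matrix n n ℝ) (ρ : ℝ) : ℝ :=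
  -trace (M * M) + trace M ^ 2 - 2 * ρ - 2 * Λ

section MatrixCalculus

-- Matrices carry no global norm; all norms on them give the same derivatives.
attribute [local instance] Matrix.linftyOpNormedRing Matrix.linftyOpNormedAlgebra

variable {n : Type*} [Fintype n] [DecidableEq n] {s : Set ℝ} {x : ℝ}

theorem hasDerivWithinAt_matrix_iff {φ : ℝ → Matrix n n ℝ} {φ' : Matrix n n ℝ} :
    HasDerivWithinAt φ φ' s x ↔ ∀ a b, HasDerivWithinAt (fun t => φ t a b) (φ' a b) s x := by
  refine ⟨fun h a b => (entryLinearMap ℝ ℝ a b).toContinuousLinearMap.hasFDerivAt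
    |>.comp_hasDerivWithinAt x h, fun h => ?_⟩
  have hsum := HasDerivWithinAt.fun_sum fun a (_ : a ∈ Finset.univ) => HasDerivWithinAt.fun_sum
    fun b (_ : b ∈ Finset.univ) => (h a b).smul_const (single a b (1 : ℝ))
  simp only [smul_single, smul_eq_mul, mul_one, ← matrix_eq_sum_single] at hsum
  exact hsum

theorem HasDerivWithinAt.matrix_inv {φ : ℝ → Matrix n n ℝ} {φ' : Matrix n n ℝ}
    (hφ : HasDerivWithinAt φ φ' s x) (hx : IsUnit (φ x)) :
    HasDerivWithinAt (fun t => (φ t)⁻¹) (-((φ x)⁻¹ * φ' * (φ x)⁻¹)) s x := by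
  have h := (hasFDerivAt_ringInverse (𝕜 := ℝ) hx.unit).comp_hasDerivWithinAt x hφ
  simp only [Function.comp_def, ← nonsing_inv_eq_ringInverse] at h
  rw [coe_units_inv, hx.unit_spec] at h
  exact h

theorem HasDerivWithinAt.matrix_trace {φ : ℝ → Matrix n n ℝ} {φ' : Matrix n n ℝ}
    (hφ : HasDerivWithinAt φ φ' s x) :
    HasDerivWithinAt (fun t => trace (φ t)) (trace φ') s x :=
  (traceLinearMap n ℝ ℝ).toContinuousLinearMap.hasFDerivAt.comp_hasDerivWithinAt x hφ

theorem hasDerivWithinAt_inv_mul_apply {g k : ℝ → Matrix n n ℝ} {g' k' : Matrix n n ℝ}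
    (hg : ∀ a b, HasDerivWithinAt (fun t => g t a b) (g' a b) s x)
    (hk : ∀ a b, HasDerivWithinAt (fun t => k t a b) (k' a b) s x) (hx : IsUnit (g x))
    (a b : n) :
    HasDerivWithinAt (fun t => ((g t)⁻¹ * k t) a b)
      (((g x)⁻¹ * (k' - g' * (g x)⁻¹ * k x)) a b) s x := by
  have h :=
    ((hasDerivWithinAt_matrix_iff.2 hg).matrix_inv hx).mul (hasDerivWithinAt_matrix_iff.2 hk)
  refine hasDerivWithinAt_matrix_iff.1 (h.congr_deriv ?_) a b
  simp only [Matrix.mul_sub, Matrix.mul_assoc, Matrix.neg_mul]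
  abel

theorem hasDerivWithinAt_xiTrace (Λ : ℝ) {M : ℝ → Matrix n n ℝ} {M' : Matrix n n ℝ}
    {ρ : ℝ → ℝ} {ρ' : ℝ} (hM : ∀ a b, HasDerivWithinAt (fun t => M t a b) (M' a b) s x)
    (hρ : HasDerivWithinAt ρ ρ' s x) :
    HasDerivWithinAt (fun t => xiTrace Λ (M t) (ρ t))
      (2 * trace (M x) * trace M' - 2 * trace (M x * M') - 2 * ρ') s x := by
  have hM := hasDerivWithinAt_matrix_iff.2 hM
  have h := (((hM.mul hM).matrix_trace.neg.add (hM.matrix_trace.pow 2)).sub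
    (hρ.const_mul 2)).sub_const (2 * Λ)
  refine h.congr_deriv ?_
  rw [trace_add, trace_mul_comm M']
  ring

end MatrixCalculus

theorem eqOn_zero_of_hasDerivWithinAt_smul {E : Type*} [NormedAddCommGroup E] [NormedSpace ℝ E]
    {f : ℝ → E} {c : ℝ → ℝ} {a b : ℝ} (hc : ContinuousOn c (Icc a b))
    (hf : ∀ t ∈ Icc a b, HasDerivWithinAt f (c t • f t) (Icc a b) t) (ha : f a = 0) :
    EqOn f 0 (Icc a b) := by
  obtain ⟨C, hC⟩ := isCompact_Icc.exists_bound_of_continuousOn hc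
  have hlip : ∀ t ∈ Ico a b, LipschitzOnWith (Real.toNNReal C) (fun x : E => c t • x) univ :=
    fun t ht => LipschitzWith.lipschitzOnWith <| LipschitzWith.of_dist_le_mul fun x y => by
      rw [dist_eq_norm, dist_eq_norm, ← smul_sub, norm_smul]
      exact mul_le_mul_of_nonneg_right ((hC t (Ico_subset_Icc_self ht)).trans (le_coe_toNNReal C))
        (norm_nonneg _)
  have hf' : ∀ t ∈ Ico a b, HasDerivWithinAt f (c t • f t) (Ici t) t := fun t ht =>
    (hf t (Ico_subset_Icc_self ht)).mono_of_mem_nhdsWithin (Icc_mem_nhdsGE_of_mem ht)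
  refine ODE_solution_unique_of_mem_Icc_right hlip
    (fun t ht => (hf t ht).continuousWithinAt) hf' (fun _ _ => mem_univ _) continuousOn_const
    (fun t _ => ?_) (fun _ _ => mem_univ _) ha
  rw [Pi.zero_apply, smul_zero]
  exact hasDerivWithinAt_const t (Ici t) (0 : E)

theorem sum_mul_inv_mul_inv_eq_trace {n : Type*} [Fintype n] [DecidableEq n]
    {G K S : Matrix n n ℝ} (hG : G.IsSymm) (hS : S.IsSymm) :
    ∑ a, ∑ b, K a b * (G⁻¹ * S * G⁻¹) a b = trace (G⁻¹ * K * (G⁻¹ * S)) := by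
  simp_rw [← hadamard_apply]
  rw [sum_hadamard_eq, transpose_mul, transpose_mul, hG.inv.eq, hS.eq, ← Matrix.mul_assoc,
    ← Matrix.mul_assoc, trace_mul_comm]
  simp only [Matrix.mul_assoc]

theorem trK_eq_trace {G M : Mat3} (hM : M.IsSymm) : trK G M = trace (G⁻¹ * M) := by
  simp_rw [trK, ← hadamard_apply]
  rw [sum_hadamard_eq, hM.eq]

theorem xiC_eq_xiTrace (Λ ρ : ℝ) {G K : Mat3} (hK : K.IsSymm) :
    xiC Λ G K ρ = xiTrace Λ (G⁻¹ * K) ρ := by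
  simp_rw [xiC, xiTrace, trK_eq_trace hK, ← hadamard_apply]
  rw [sum_hadamard_eq, hK.eq, Matrix.mul_assoc (G⁻¹ * K)]

theorem inv_mul_kEvolAbs_sub (Λ ρ : ℝ) {G K S : Mat3} (hG : IsUnit G) (hK : K.IsSymm)
    (hS : S.IsSymm) :
    G⁻¹ * (kEvolAbs Λ G K S ρ - ((-2 : ℝ) • K) * G⁻¹ * K) =
      -trace (G⁻¹ * K) • (G⁻¹ * K) + G⁻¹ * S + ((1 / 2) * (ρ - trace (G⁻¹ * S)) + Λ) • 1 := by
  have hGG : G⁻¹ * G = 1 := nonsing_inv_mul G ((isUnit_iff_isUnit_det G).1 hG)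
  rw [kEvolAbs, trK_eq_trace hK, trK_eq_trace hS]
  simp only [Matrix.mul_add, Matrix.mul_sub, Matrix.mul_neg, Matrix.neg_mul, mul_smul_comm,
    smul_mul_assoc, ← Matrix.mul_assoc, hGG, add_smul, neg_smul]
  abel

theorem xiTrace_evolution_eq (Λ ρ : ℝ) (M N : Mat3) :
    2 * trace M * trace (-trace M • M + N + ((1 / 2) * (ρ - trace N) + Λ) • 1)
      - 2 * trace (M * (-trace M • M + N + ((1 / 2) * (ρ - trace N) + Λ) • 1))
      - 2 * (-trace M * ρ - trace (M * N)) = -2 * trace M * xiTrace Λ M ρ := by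
  simp only [xiTrace, Matrix.mul_add, Matrix.mul_smul, Matrix.mul_one, trace_add, trace_smul,
    trace_one, Fintype.card_fin, smul_eq_mul]
  push_cast
  ring

theorem stmt14_general (Λ t₀ T : ℝ)
    (g k SM : ℝ → Mat3) (ρ : ℝ → ℝ)
    (hgpd : ∀ t ∈ Icc t₀ T, (g t).PosDef)
    (hksym : ∀ t ∈ Icc t₀ T, (k t).IsSymm)
    (hSsym : ∀ t ∈ Icc t₀ T, (SM t).IsSymm)
    (hgode : ∀ a b : Fin 3, ∀ t ∈ Icc t₀ T,
      HasDerivWithinAt (fun s => g s a b) (-2 * k t a b) (Icc t₀ T) t)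
    (hkode : ∀ a b : Fin 3, ∀ t ∈ Icc t₀ T,
      HasDerivWithinAt (fun s => k s a b)
        (kEvolAbs Λ (g t) (k t) (SM t) (ρ t) a b) (Icc t₀ T) t)
    (hρode : ∀ t ∈ Icc t₀ T,
      HasDerivWithinAt ρ
        (-(trK (g t) (k t)) * ρ t
          - ∑ a, ∑ b, k t a b * ((g t)⁻¹ * SM t * (g t)⁻¹) a b) (Icc t₀ T) t) :
    (∀ t ∈ Icc t₀ T,
      HasDerivWithinAt (fun s => xiC Λ (g s) (k s) (ρ s))
        (-2 * trK (g t) (k t) * xiC Λ (g t) (k t) (ρ t)) (Icc t₀ T) t) ∧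
    (xiC Λ (g t₀) (k t₀) (ρ t₀) = 0 → ∀ t ∈ Icc t₀ T, xiC Λ (g t) (k t) (ρ t) = 0) := by
  have hM t (ht : t ∈ Icc t₀ T) := hasDerivWithinAt_inv_mul_apply (g' := (-2 : ℝ) • k t)
    (hgode · · t ht) (hkode · · t ht) (hgpd t ht).isUnit
  have hderiv : ∀ t ∈ Icc t₀ T, HasDerivWithinAt (fun s => xiC Λ (g s) (k s) (ρ s))
      (-2 * trK (g t) (k t) * xiC Λ (g t) (k t) (ρ t)) (Icc t₀ T) t := by
    intro t ht
    have hg : (g t).IsSymm := isHermitian_iff_isSymm.1 (hgpd t ht).isHermitian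
    have hξ := hasDerivWithinAt_xiTrace Λ (hM t ht) (hρode t ht)
    rw [inv_mul_kEvolAbs_sub Λ (ρ t) (hgpd t ht).isUnit (hksym t ht) (hSsym t ht),
      trK_eq_trace (hksym t ht), sum_mul_inv_mul_inv_eq_trace hg (hSsym t ht),
      xiTrace_evolution_eq] at hξ
    rw [trK_eq_trace (hksym t ht), xiC_eq_xiTrace _ _ (hksym t ht)]
    exact hξ.congr (fun s hs => xiC_eq_xiTrace _ _ (hksym s hs)) (xiC_eq_xiTrace _ _ (hksym t ht))
  have hτ : ContinuousOn (fun t => trK (g t) (k t)) (Icc t₀ T) := by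
    refine ContinuousOn.congr ?_ fun t ht => trK_eq_trace (hksym t ht)
    simp only [trace, diag]
    exact continuousOn_finsetSum _ fun i _ t ht => (hM t ht i i).continuousWithinAt
  exact ⟨hderiv, fun h0 => eqOn_zero_of_hasDerivWithinAt_smul (continuousOn_const.mul hτ) hderiv h0⟩

/-- propagation of the Hamiltonian constraint. If `g, k, S, ρ` satisfy the
Einstein evolution equations and `dρ/dt = −kρ − k^{ab}S_{ab}`, then
`ξ = −k_{ab}k^{ab} + k² − 2ρ − 2Λ` satisfies `dξ/dt = −2kξ`; in particular `ξ(t₀) = 0`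
implies `ξ ≡ 0` on `[t₀,T]`. -/
theorem stmt14 (Λ t₀ T : ℝ) (hT : t₀ ≤ T)
    (g k SM : ℝ → Mat3) (ρ : ℝ → ℝ)
    (hgpd : ∀ t ∈ Icc t₀ T, (g t).PosDef)
    (hksym : ∀ t ∈ Icc t₀ T, (k t).IsSymm)
    (hSsym : ∀ t ∈ Icc t₀ T, (SM t).IsSymm)
    (hScont : ∀ a b : Fin 3, ContinuousOn (fun t => SM t a b) (Icc t₀ T))
    (hgode : ∀ a b : Fin 3, ∀ t ∈ Icc t₀ T,
      HasDerivWithinAt (fun s => g s a b) (-2 * k t a b) (Icc t₀ T) t)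
    (hkode : ∀ a b : Fin 3, ∀ t ∈ Icc t₀ T,
      HasDerivWithinAt (fun s => k s a b)
        (kEvolAbs Λ (g t) (k t) (SM t) (ρ t) a b) (Icc t₀ T) t)
    (hρode : ∀ t ∈ Icc t₀ T,
      HasDerivWithinAt ρ
        (-(trK (g t) (k t)) * ρ t
          - ∑ a, ∑ b, k t a b * ((g t)⁻¹ * SM t * (g t)⁻¹) a b) (Icc t₀ T) t) :
    (∀ t ∈ Icc t₀ T,
      HasDerivWithinAt (fun s => xiC Λ (g s) (k s) (ρ s))
        (-2 * trK (g t) (k t) * xiC Λ (g t) (k t) (ρ t)) (Icc t₀ T) t) ∧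
    (xiC Λ (g t₀) (k t₀) (ρ t₀) = 0 → ∀ t ∈ Icc t₀ T, xiC Λ (g t) (k t) (ρ t) = 0) :=
  stmt14_general Λ t₀ T g k SM ρ hgpd hksym hSsym hgode hkode hρode
end
end

section
/- (Monotonicity and lower bound for the Hubble variable.) Let Λ > 0 and γ = √(Λ/3). Suppose H : [t₀,T) → ℝ is differentiable and ρ, S, Q : [t₀,T) → ℝ are continuous with Q ≥ 0, ρ ≥ 0, 0 ≤ S ≤ ρ, and suppose the constraint 6H² = Q + 2ρ + 2Λ and the evolution equation dH/dt = −3H² + (1/2)ρ − (1/6)S + Λ hold on [t₀,T), with H(t₀) > γ. Then for all t ∈ [t₀,T): dH/dt ≤ 0, H(t) ≥ γ, and dH/dt ≤ −(H+γ)(H−γ). -/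
open Real Set

/-- monotonicity and lower bound for the Hubble variable. Under the
constraint `6H² = Q + 2ρ + 2Λ` (with `Q ≥ 0`, `0 ≤ S ≤ ρ`) and the evolution equation
`dH/dt = −3H² + (1/2)ρ − (1/6)S + Λ`, with `H(t₀) > γ = √(Λ/3)`, one has `dH/dt ≤ 0`,
`H ≥ γ` and `dH/dt ≤ −(H+γ)(H−γ)` on `[t₀,T)`. -/
theorem stmt17 (Λ γ t₀ T : ℝ) (hΛ : 0 < Λ) (hγ : γ = Real.sqrt (Λ / 3)) (hT : t₀ < T)
    (H ρ S Q : ℝ → ℝ)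
    (hρc : ContinuousOn ρ (Ico t₀ T)) (hSc : ContinuousOn S (Ico t₀ T))
    (hQc : ContinuousOn Q (Ico t₀ T))
    (hQ : ∀ t ∈ Ico t₀ T, 0 ≤ Q t) (hρ : ∀ t ∈ Ico t₀ T, 0 ≤ ρ t)
    (hS : ∀ t ∈ Ico t₀ T, 0 ≤ S t ∧ S t ≤ ρ t)
    (hcon : ∀ t ∈ Ico t₀ T, 6 * H t ^ 2 = Q t + 2 * ρ t + 2 * Λ)
    (hH : ∀ t ∈ Ico t₀ T,
      HasDerivWithinAt H (-3 * H t ^ 2 + (1 / 2) * ρ t - (1 / 6) * S t + Λ) (Ico t₀ T) t)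
    (hH₀ : γ < H t₀) :
    ∀ t ∈ Ico t₀ T,
      (-3 * H t ^ 2 + (1 / 2) * ρ t - (1 / 6) * S t + Λ ≤ 0) ∧
      γ ≤ H t ∧
      (-3 * H t ^ 2 + (1 / 2) * ρ t - (1 / 6) * S t + Λ ≤ -((H t + γ) * (H t - γ))) := by
  have hγ0 : 0 < γ := by
    rw [hγ]; exact Real.sqrt_pos.mpr (by linarith)
  have hγ2 : γ ^ 2 = Λ / 3 := by
    rw [hγ, sq_sqrt]; linarith
  have hHc : ContinuousOn H (Ico t₀ T) := fun s hs => (hH s hs).continuousWithinAt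
  have hsq : ∀ s ∈ Ico t₀ T, γ ^ 2 ≤ H s ^ 2 := by
    intro s hs
    have h1 := hcon s hs
    have h2 := hQ s hs
    have h3 := hρ s hs
    nlinarith
  intro t ht
  have hc := hcon t ht
  have hq := hQ t ht
  have hr := hρ t ht
  have hs := hS t ht
  refine ⟨by nlinarith [hs.1, hs.2], ?_, by nlinarith [hsq t ht, hs.1]⟩
  by_contra hcon'
  push_neg at hcon'
  have hneg : H t ≤ -γ := by nlinarith [hsq t ht]
  have hsub : Icc t₀ t ⊆ Ico t₀ T := fun x hx => ⟨hx.1, lt_of_le_of_lt hx.2 ht.2⟩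
  obtain ⟨s, hsmem, hs0⟩ := intermediate_value_Icc' ht.1 (hHc.mono hsub)
    (show (0:ℝ) ∈ Icc (H t) (H t₀) from ⟨by linarith, by linarith⟩)
  have := hsq s (hsub hsmem)
  nlinarith
end

section
/- (Decay and strict positivity of H − γ.) Let Λ > 0 and γ = √(Λ/3). Suppose H : [t₀,T) → ℝ is differentiable and ρ, S, Q : [t₀,T) → ℝ are continuous with Q ≥ 0, ρ ≥ 0, 0 ≤ S ≤ ρ, the constraint 6H² = Q + 2ρ + 2Λ and the evolution equation dH/dt = −3H² + (1/2)ρ − (1/6)S + Λ hold, and H(t₀) > γ. Write H₀ = H(t₀). Then for all t ∈ [t₀,T): H(t) − γ ≤ (H₀ − γ) e^{−2γ(t−t₀)}, and H(t) − γ ≥ (H₀ − γ) e^{−3(H₀+γ)(t−t₀)} > 0 (equivalently 1/(H(t)−γ) ≤ (1/(H₀−γ)) e^{3(H₀+γ)(t−t₀)}). -/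
/-!
The constraint gives `3H² ≥ Λ`, so by continuity `H` stays on the branch `H ≥ γ`. Eliminating `Q`
with the constraint gives `Ḣ ≤ -(3/2) (H - γ)(H + γ)`, and `0 ≤ S ≤ ρ` alone gives
`Ḣ ≥ -3 (H - γ)(H + γ)`. With `γ ≤ H ≤ H₀` these become the linear differential inequalities
`Ḣ ≤ -2γ (H - γ)` and `Ḣ ≥ -3 (H₀ + γ)(H - γ)`, which Grönwall's inequality integrates.
-/

open Real Set

theorem le_mul_exp_of_hasDerivWithinAt_le_mul {f f' : ℝ → ℝ} {K a b : ℝ}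
    (hf : ∀ x ∈ Ico a b, HasDerivWithinAt f (f' x) (Ico a b) x)
    (hbound : ∀ x ∈ Ico a b, f' x ≤ K * f x) :
    ∀ t ∈ Ico a b, f t ≤ f a * exp (K * (t - a)) := by
  intro t ht
  have hsub : Icc a t ⊆ Ico a b := Icc_subset_Ico_right ht.2
  have hf_right : ∀ x ∈ Ico a t, HasDerivWithinAt f (f' x) (Ici x) x := fun x hx =>
    (hf x (hsub (Ico_subset_Icc_self hx))).mono_of_mem_nhdsWithin
      (Ico_mem_nhdsGE_of_mem (hsub (Ico_subset_Icc_self hx)))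
  have hgronwall := le_gronwallBound_of_liminf_deriv_right_le (ε := 0)
    (fun x hx => (hf x (hsub hx)).continuousWithinAt.mono hsub)
    (fun x hx _ hr => (hf_right x hx).liminf_right_slope_le hr) le_rfl
    (fun x hx => by simpa using hbound x (hsub (Ico_subset_Icc_self hx))) t ⟨ht.1, le_rfl⟩
  rwa [gronwallBound_ε0] at hgronwall

theorem le_of_sq_le_sq_of_continuousOn {f : ℝ → ℝ} {c a b : ℝ} (hc : 0 < c)
    (hf : ContinuousOn f (Ico a b)) (ha : 0 < f a) (hsq : ∀ x ∈ Ico a b, c ^ 2 ≤ f x ^ 2) :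
    ∀ x ∈ Ico a b, c ≤ f x := by
  intro t ht
  by_contra! hlt
  have hneg : f t ≤ -c := by nlinarith [hsq t ht]
  obtain ⟨s, hs, hs0⟩ := isPreconnected_Ico.intermediate_value ht
    ⟨le_rfl, ht.1.trans_lt ht.2⟩ hf ⟨by linarith, ha.le⟩
  nlinarith [hsq s hs]

theorem stmt18_general (Λ γ t₀ T : ℝ) (hΛ : 0 < Λ) (hγ : γ = Real.sqrt (Λ / 3))
    (H ρ S Q : ℝ → ℝ)
    (hQ : ∀ t ∈ Ico t₀ T, 0 ≤ Q t)
    (hS : ∀ t ∈ Ico t₀ T, 0 ≤ S t ∧ S t ≤ ρ t)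
    (hcon : ∀ t ∈ Ico t₀ T, 6 * H t ^ 2 = Q t + 2 * ρ t + 2 * Λ)
    (hH : ∀ t ∈ Ico t₀ T,
      HasDerivWithinAt H (-3 * H t ^ 2 + (1 / 2) * ρ t - (1 / 6) * S t + Λ) (Ico t₀ T) t)
    (hH₀ : γ < H t₀) :
    ∀ t ∈ Ico t₀ T,
      H t - γ ≤ (H t₀ - γ) * Real.exp (-(2 * γ * (t - t₀))) ∧
      (H t₀ - γ) * Real.exp (-(3 * (H t₀ + γ) * (t - t₀))) ≤ H t - γ ∧
      0 < H t - γ ∧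
      1 / (H t - γ) ≤ (1 / (H t₀ - γ)) * Real.exp (3 * (H t₀ + γ) * (t - t₀)) := by
  have hγ_pos : 0 < γ := hγ ▸ sqrt_pos.2 (by positivity)
  have hγ_sq : 3 * γ ^ 2 = Λ := by rw [hγ, sq_sqrt (by positivity)]; ring
  have hH_ge : ∀ t ∈ Ico t₀ T, γ ≤ H t :=
    le_of_sq_le_sq_of_continuousOn hγ_pos (fun t ht => (hH t ht).continuousWithinAt)
      (by linarith) fun t ht => by nlinarith [hcon t ht, hQ t ht, hS t ht]
  have h_upper : ∀ t ∈ Ico t₀ T, H t - γ ≤ (H t₀ - γ) * exp (-(2 * γ) * (t - t₀)) :=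
    le_mul_exp_of_hasDerivWithinAt_le_mul (fun t ht => (hH t ht).sub_const γ) fun t ht => by
      nlinarith [hcon t ht, hQ t ht, hS t ht, hH_ge t ht]
  have hH_le : ∀ t ∈ Ico t₀ T, H t ≤ H t₀ := fun t ht => by
    have hexp : exp (-(2 * γ) * (t - t₀)) ≤ 1 := exp_le_one_iff.2 (by nlinarith [ht.1])
    nlinarith [h_upper t ht]
  have h_lower : ∀ t ∈ Ico t₀ T,
      γ - H t ≤ (γ - H t₀) * exp (-(3 * (H t₀ + γ)) * (t - t₀)) :=
    le_mul_exp_of_hasDerivWithinAt_le_mul (fun t ht => (hH t ht).const_sub γ) fun t ht => by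
      nlinarith [hS t ht, hH_ge t ht, hH_le t ht]
  intro t ht
  have hlow : (H t₀ - γ) * exp (-(3 * (H t₀ + γ) * (t - t₀))) ≤ H t - γ := by
    have := h_lower t ht
    rw [neg_mul] at this
    linarith
  have hlow_pos : 0 < (H t₀ - γ) * exp (-(3 * (H t₀ + γ) * (t - t₀))) :=
    mul_pos (by linarith) (exp_pos _)
  refine ⟨by simpa [neg_mul] using h_upper t ht, hlow, hlow_pos.trans_le hlow, ?_⟩
  calc 1 / (H t - γ) ≤ 1 / ((H t₀ - γ) * exp (-(3 * (H t₀ + γ) * (t - t₀)))) :=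
        one_div_le_one_div_of_le hlow_pos hlow
    _ = 1 / (H t₀ - γ) * exp (3 * (H t₀ + γ) * (t - t₀)) := by
        rw [exp_neg]; field_simp

/-- decay and strict positivity of `H − γ`. Under the constraint
`6H² = Q + 2ρ + 2Λ` (with `Q ≥ 0`, `0 ≤ S ≤ ρ`), the evolution equation
`dH/dt = −3H² + (1/2)ρ − (1/6)S + Λ` and `H(t₀) = H₀ > γ = √(Λ/3)`, one has
`H − γ ≤ (H₀−γ)e^{−2γ(t−t₀)}` and `H − γ ≥ (H₀−γ)e^{−3(H₀+γ)(t−t₀)} > 0`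
(equivalently `1/(H−γ) ≤ (1/(H₀−γ)) e^{3(H₀+γ)(t−t₀)}`). -/
theorem stmt18 (Λ γ t₀ T : ℝ) (hΛ : 0 < Λ) (hγ : γ = Real.sqrt (Λ / 3)) (hT : t₀ < T)
    (H ρ S Q : ℝ → ℝ)
    (hρc : ContinuousOn ρ (Ico t₀ T)) (hSc : ContinuousOn S (Ico t₀ T))
    (hQc : ContinuousOn Q (Ico t₀ T))
    (hQ : ∀ t ∈ Ico t₀ T, 0 ≤ Q t) (hρ : ∀ t ∈ Ico t₀ T, 0 ≤ ρ t)
    (hS : ∀ t ∈ Ico t₀ T, 0 ≤ S t ∧ S t ≤ ρ t)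
    (hcon : ∀ t ∈ Ico t₀ T, 6 * H t ^ 2 = Q t + 2 * ρ t + 2 * Λ)
    (hH : ∀ t ∈ Ico t₀ T,
      HasDerivWithinAt H (-3 * H t ^ 2 + (1 / 2) * ρ t - (1 / 6) * S t + Λ) (Ico t₀ T) t)
    (hH₀ : γ < H t₀) :
    ∀ t ∈ Ico t₀ T,
      H t - γ ≤ (H t₀ - γ) * Real.exp (-(2 * γ * (t - t₀))) ∧
      (H t₀ - γ) * Real.exp (-(3 * (H t₀ + γ) * (t - t₀))) ≤ H t - γ ∧
      0 < H t - γ ∧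
      1 / (H t - γ) ≤ (1 / (H t₀ - γ)) * Real.exp (3 * (H t₀ + γ) * (t - t₀)) :=
  stmt18_general Λ γ t₀ T hΛ hγ H ρ S Q hQ hS hcon hH hH₀
end

section
/- (Exponential decay of the shear.) Let Λ > 0 and γ = √(Λ/3). Suppose H : [t₀,T) → ℝ is differentiable and ρ, S, Q : [t₀,T) → ℝ are continuous with Q ≥ 0, ρ ≥ 0, 0 ≤ S ≤ ρ, the constraint 6H² = Q + 2ρ + 2Λ and the evolution equation dH/dt = −3H² + (1/2)ρ − (1/6)S + Λ hold, and H(t₀) > γ. Write H₀ = H(t₀). Then for all t ∈ [t₀,T): Q(t) ≤ 6(H₀ + γ)(H₀ − γ) e^{−2γ(t−t₀)}. -/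
open Real Set

/-- exponential decay of the shear. Under the constraint
`6H² = Q + 2ρ + 2Λ` (with `Q ≥ 0`, `0 ≤ S ≤ ρ`), the evolution equation
`dH/dt = −3H² + (1/2)ρ − (1/6)S + Λ` and `H(t₀) = H₀ > γ = √(Λ/3)`, one has
`Q(t) ≤ 6(H₀+γ)(H₀−γ)e^{−2γ(t−t₀)}` on `[t₀,T)`. -/
theorem stmt19 (Λ γ t₀ T : ℝ) (hΛ : 0 < Λ) (hγ : γ = Real.sqrt (Λ / 3)) (hT : t₀ < T)
    (H ρ S Q : ℝ → ℝ)
    (hρc : ContinuousOn ρ (Ico t₀ T)) (hSc : ContinuousOn S (Ico t₀ T))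
    (hQc : ContinuousOn Q (Ico t₀ T))
    (hQ : ∀ t ∈ Ico t₀ T, 0 ≤ Q t) (hρ : ∀ t ∈ Ico t₀ T, 0 ≤ ρ t)
    (hS : ∀ t ∈ Ico t₀ T, 0 ≤ S t ∧ S t ≤ ρ t)
    (hcon : ∀ t ∈ Ico t₀ T, 6 * H t ^ 2 = Q t + 2 * ρ t + 2 * Λ)
    (hH : ∀ t ∈ Ico t₀ T,
      HasDerivWithinAt H (-3 * H t ^ 2 + (1 / 2) * ρ t - (1 / 6) * S t + Λ) (Ico t₀ T) t)
    (hH₀ : γ < H t₀) :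
    ∀ t ∈ Ico t₀ T,
      Q t ≤ 6 * (H t₀ + γ) * (H t₀ - γ) * Real.exp (-(2 * γ * (t - t₀))) := by
  have hγ2 : γ ^ 2 = Λ / 3 := by
    rw [hγ, sq_sqrt]; positivity
  have hγpos : 0 < γ := by rw [hγ]; positivity
  have hHc : ContinuousOn H (Ico t₀ T) := fun t ht => (hH t ht).continuousWithinAt
  have ht₀ : t₀ ∈ Ico t₀ T := ⟨le_refl _, hT⟩
  have hsq : ∀ s ∈ Ico t₀ T, γ ^ 2 ≤ H s ^ 2 := by
    intro s hs
    have := hcon s hs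
    nlinarith [hQ s hs, hρ s hs]
  -- H ≥ γ on the interval
  have hHγ : ∀ t ∈ Ico t₀ T, γ ≤ H t := by
    intro t ht
    by_contra hlt
    push_neg at hlt
    have hneg : H t < 0 := by nlinarith [hsq t ht]
    have hicc : Icc t₀ t ⊆ Ico t₀ T := fun s hs => ⟨hs.1, lt_of_le_of_lt hs.2 ht.2⟩
    have hiv := intermediate_value_Icc' ht.1 (hHc.mono hicc)
    have h0 : (0 : ℝ) ∈ Icc (H t) (H t₀) := ⟨le_of_lt hneg, le_of_lt (lt_trans hγpos hH₀)⟩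
    obtain ⟨s, hsmem, hHs⟩ := hiv h0
    have := hsq s (hicc hsmem)
    rw [hHs] at this
    nlinarith
  set u : ℝ → ℝ := fun t => (H t - γ) * Real.exp (2 * γ * (t - t₀)) with hu
  have key : ∀ x ∈ Ioo t₀ T, HasDerivAt u
      ((-3 * H x ^ 2 + (1 / 2) * ρ x - (1 / 6) * S x + Λ) * Real.exp (2 * γ * (x - t₀))
        + (H x - γ) * (Real.exp (2 * γ * (x - t₀)) * (2 * γ))) x := by
    intro x hx
    have hmem : x ∈ Ico t₀ T := ⟨le_of_lt hx.1, hx.2⟩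
    have hnhds : Ico t₀ T ∈ nhds x :=
      mem_nhds_iff.mpr ⟨Ioo t₀ T, Ioo_subset_Ico_self, isOpen_Ioo, hx⟩
    have hHd : HasDerivAt H (-3 * H x ^ 2 + (1 / 2) * ρ x - (1 / 6) * S x + Λ) x :=
      (hH x hmem).hasDerivAt hnhds
    have hlin : HasDerivAt (fun t => 2 * γ * (t - t₀)) (2 * γ) x := by
      simpa using ((hasDerivAt_id x).sub_const t₀).const_mul (2 * γ)
    have hed : HasDerivAt (fun t => Real.exp (2 * γ * (t - t₀)))
        (Real.exp (2 * γ * (x - t₀)) * (2 * γ)) x := hlin.exp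
    exact (hHd.sub_const γ).mul hed
  have hanti : AntitoneOn u (Ico t₀ T) := by
    apply antitoneOn_of_deriv_nonpos (convex_Ico t₀ T)
    · exact (hHc.sub continuousOn_const).mul
        ((Real.continuous_exp.comp (by continuity)).continuousOn)
    · intro x hx
      rw [interior_Ico] at hx
      exact (key x hx).differentiableAt.differentiableWithinAt
    · intro x hx
      rw [interior_Ico] at hx
      have hmem : x ∈ Ico t₀ T := ⟨le_of_lt hx.1, hx.2⟩
      rw [(key x hx).deriv]
      have hγle := hHγ x hmem
      have hQx := hQ x hmem
      have hSx := (hS x hmem).1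
      have hconx := hcon x hmem
      have hexp : (0 : ℝ) < Real.exp (2 * γ * (x - t₀)) := Real.exp_pos _
      nlinarith [mul_nonneg (sub_nonneg.2 hγle) (by nlinarith : (0:ℝ) ≤ 3 * H x - γ),
        mul_pos hexp hγpos, hexp,
        mul_le_mul_of_nonneg_right (show (-3 * H x ^ 2 + (1 / 2) * ρ x - (1 / 6) * S x + Λ)
            + (H x - γ) * (2 * γ) ≤ 0 by nlinarith) (le_of_lt hexp)]
  intro t ht
  have hul : u t ≤ u t₀ := hanti ht₀ ht ht.1
  have hu0 : u t₀ = H t₀ - γ := by simp [hu]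
  have hE1 : (1 : ℝ) ≤ Real.exp (2 * γ * (t - t₀)) := by
    apply Real.one_le_exp
    have : 0 ≤ t - t₀ := sub_nonneg.2 ht.1
    positivity
  have hexp : (0 : ℝ) < Real.exp (2 * γ * (t - t₀)) := Real.exp_pos _
  have hdecay : (H t - γ) * Real.exp (2 * γ * (t - t₀)) ≤ H t₀ - γ := by
    rw [← hu0]; exact hul
  have hHle : H t ≤ H t₀ := by
    have h1 : H t - γ ≤ (H t - γ) * Real.exp (2 * γ * (t - t₀)) :=
      le_mul_of_one_le_right (sub_nonneg.2 (hHγ t ht)) hE1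
    linarith
  have hQb : Q t * Real.exp (2 * γ * (t - t₀)) ≤ 6 * (H t₀ + γ) * (H t₀ - γ) := by
    have hQle : Q t ≤ 6 * (H t - γ) * (H t + γ) := by
      have := hcon t ht
      nlinarith [hρ t ht]
    have hHγt := hHγ t ht
    have hfac : 6 * (H t - γ) * (H t + γ) ≤ 6 * (H t₀ + γ) * (H t - γ) := by nlinarith
    calc Q t * Real.exp (2 * γ * (t - t₀))
        ≤ 6 * (H t₀ + γ) * (H t - γ) * Real.exp (2 * γ * (t - t₀)) := by
          apply mul_le_mul_of_nonneg_right _ (le_of_lt hexp)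
          linarith
      _ ≤ 6 * (H t₀ + γ) * (H t₀ - γ) := by
          have hpos : (0 : ℝ) ≤ 6 * (H t₀ + γ) := by nlinarith
          calc 6 * (H t₀ + γ) * (H t - γ) * Real.exp (2 * γ * (t - t₀))
              = 6 * (H t₀ + γ) * ((H t - γ) * Real.exp (2 * γ * (t - t₀))) := by ring
            _ ≤ 6 * (H t₀ + γ) * (H t₀ - γ) := mul_le_mul_of_nonneg_left hdecay hpos
  rw [Real.exp_neg, ← div_eq_mul_inv, le_div_iff₀ hexp]
  exact hQb
end
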